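/- With f_{a,i} = (1/(2i)) ∑_{d | i, d odd} μ(d) (2a)^{i/d} and g_{a,i} = 2i f_{a,i} / (2a)^i, for all integers a ≥ 1 and i ≥ 3 we have the bounds 1 - 2(2a)^{-2i/3} ≤ g_{a,i} ≤ 1 + 2(2a)^{-2i/3}. -/

import Mathlib

/-!
Only the term `d = 1` of the sum is of size `(2a)^i`. Every other odd divisor is at least `3`,
and distinct divisors `d` give distinct exponents `i / d ≤ i / 3`, so the remaining terms are
bounded by a geometric sum `∑_{k ≤ i/3} (2a)^k ≤ 2 (2a)^{i/3}` because the ratio `2a` is at least `2`.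
Dividing by `(2a)^i` gives `|g_{a,i} - 1| ≤ 2 (2a)^{-2i/3}`.
-/

/-- `f_{a,i} = (1/(2i)) ∑_{d ∣ i, d odd} μ(d) (2a)^{i/d}`. -/
noncomputable def fai (a i : ℕ) : ℝ :=
  (1 / (2 * (i : ℝ))) * ∑ d ∈ (Nat.divisors i).filter (fun d => Odd d),
    ((ArithmeticFunction.moebius d : ℤ) : ℝ) * (2 * (a : ℝ)) ^ (i / d)

/-- `g_{a,i} = 2i f_{a,i} / (2a)^i`. -/
noncomputable def gai (a i : ℕ) : ℝ :=
  2 * (i : ℝ) * fai a i / (2 * (a : ℝ)) ^ i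

open Finset

lemma sum_Icc_pow_le_two_mul_pow {x : ℝ} (hx : 2 ≤ x) (m : ℕ) :
    ∑ k ∈ Icc 1 m, x ^ k ≤ 2 * x ^ m := by
  induction m with
  | zero => simp
  | succ m ih =>
    rw [sum_Icc_succ_top (by omega), pow_succ]
    nlinarith [pow_nonneg (by linarith : (0 : ℝ) ≤ x) m]

lemma sum_pow_div_le_sum_Icc {x : ℝ} (hx : 0 ≤ x) {n : ℕ} (hn : n ≠ 0) {D : Finset ℕ}
    (hD : ∀ d ∈ D, d ∣ n ∧ 3 ≤ d) :
    ∑ d ∈ D, x ^ (n / d) ≤ ∑ k ∈ Icc 1 (n / 3), x ^ k := by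
  have hinj : Set.InjOn (fun d => n / d) D := fun d₁ h₁ d₂ h₂ h => by
    rw [← Nat.div_div_self (hD d₁ h₁).1 hn, ← Nat.div_div_self (hD d₂ h₂).1 hn]
    exact congrArg (n / ·) h
  rw [← sum_image hinj]
  refine sum_le_sum_of_subset_of_nonneg ?_ fun k _ _ => pow_nonneg hx k
  intro k hk
  obtain ⟨d, hd, rfl⟩ := mem_image.1 hk
  obtain ⟨hdvd, hd3⟩ := hD d hd
  exact mem_Icc.2 ⟨Nat.div_pos (Nat.le_of_dvd (Nat.pos_of_ne_zero hn) hdvd) (by omega),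
    Nat.div_le_div_left hd3 (by omega)⟩

lemma abs_sum_moebius_odd_divisors_sub_pow_le {x : ℝ} (hx : 2 ≤ x) {n : ℕ} (hn : n ≠ 0) :
    |∑ d ∈ n.divisors.filter Odd, ((ArithmeticFunction.moebius d : ℤ) : ℝ) * x ^ (n / d) - x ^ n|
      ≤ 2 * x ^ (n / 3) := by
  have h1 : 1 ∈ n.divisors.filter Odd := by simp [hn]
  rw [← add_sum_erase _ _ h1]
  simp only [ArithmeticFunction.moebius_apply_one, Int.cast_one, one_mul, Nat.div_one,
    add_sub_cancel_left]
  have hD : ∀ d ∈ (n.divisors.filter Odd).erase 1, d ∣ n ∧ 3 ≤ d := by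
    intro d hd
    simp only [mem_erase, mem_filter, Nat.mem_divisors] at hd
    obtain ⟨hd1, ⟨hdvd, -⟩, k, rfl⟩ := hd
    exact ⟨hdvd, by omega⟩
  calc _ ≤ ∑ d ∈ (n.divisors.filter Odd).erase 1,
          |((ArithmeticFunction.moebius d : ℤ) : ℝ) * x ^ (n / d)| := abs_sum_le_sum_abs _ _
    _ ≤ ∑ d ∈ (n.divisors.filter Odd).erase 1, x ^ (n / d) := by
      gcongr with d
      rw [abs_mul, abs_of_nonneg (by positivity : (0 : ℝ) ≤ x ^ (n / d))]
      exact mul_le_of_le_one_left (by positivity)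
        (by exact_mod_cast ArithmeticFunction.abs_moebius_le_one)
    _ ≤ ∑ k ∈ Icc 1 (n / 3), x ^ k := sum_pow_div_le_sum_Icc (by linarith) hn hD
    _ ≤ 2 * x ^ (n / 3) := sum_Icc_pow_le_two_mul_pow hx _

lemma gai_eq {a i : ℕ} (hi : i ≠ 0) :
    gai a i = (∑ d ∈ i.divisors.filter Odd,
      ((ArithmeticFunction.moebius d : ℤ) : ℝ) * (2 * (a : ℝ)) ^ (i / d)) / (2 * (a : ℝ)) ^ i := by
  have : (i : ℝ) ≠ 0 := by exact_mod_cast hi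
  unfold gai fai
  field_simp

lemma pow_div_three_div_pow_le {x : ℝ} (hx : 1 ≤ x) (n : ℕ) :
    x ^ (n / 3) / x ^ n ≤ x ^ (-(2 * (n : ℝ) / 3)) := by
  have hx0 : 0 < x := by linarith
  rw [← Real.rpow_natCast x (n / 3), ← Real.rpow_natCast x n, ← Real.rpow_sub hx0]
  refine Real.rpow_le_rpow_of_exponent_le hx ?_
  linarith [(Nat.cast_div_le : ((n / 3 : ℕ) : ℝ) ≤ n / 3)]

/-- For all `a ≥ 1` and `i ≥ 3`:
`1 - 2(2a)^{-2i/3} ≤ g_{a,i} ≤ 1 + 2(2a)^{-2i/3}`. -/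
theorem gai_linear_bounds (a i : ℕ) (ha : 1 ≤ a) (hi : 3 ≤ i) :
    1 - 2 * (2 * (a : ℝ)) ^ (-(2 * (i : ℝ) / 3)) ≤ gai a i
      ∧ gai a i ≤ 1 + 2 * (2 * (a : ℝ)) ^ (-(2 * (i : ℝ) / 3)) := by
  have hx : (2 : ℝ) ≤ 2 * a := by
    have : (1 : ℝ) ≤ a := by exact_mod_cast ha
    linarith
  have hxi : (0 : ℝ) < (2 * a) ^ i := by positivity
  have hi0 : i ≠ 0 := by omega
  have hdev : |gai a i - 1| ≤ 2 * (2 * (a : ℝ)) ^ (-(2 * (i : ℝ) / 3)) := by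
    calc |gai a i - 1|
        = |∑ d ∈ i.divisors.filter Odd, ((ArithmeticFunction.moebius d : ℤ) : ℝ) *
            (2 * (a : ℝ)) ^ (i / d) - (2 * a) ^ i| / (2 * a) ^ i := by
          rw [gai_eq hi0, div_sub_one hxi.ne', abs_div, abs_of_pos hxi]
      _ ≤ 2 * (2 * (a : ℝ)) ^ (i / 3) / (2 * a) ^ i := by
          gcongr
          exact abs_sum_moebius_odd_divisors_sub_pow_le hx hi0
      _ ≤ 2 * (2 * (a : ℝ)) ^ (-(2 * (i : ℝ) / 3)) := by
          rw [mul_div_assoc]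
          gcongr
          exact pow_div_three_div_pow_le (by linarith) i
  constructor <;> linarith [(abs_le.1 hdev).1, (abs_le.1 hdev).2]
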